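/- Let f : ℝ → ℝ be C¹ with f' < 0 everywhere (so the Engquist–Osher flux is F(a,b) = f(b)), and let A : ℝ → ℝ be nondecreasing and Lipschitz. Then the semi-discrete scheme d/dt u_j = −(f(u_{j+1}) − f(u_j))/Δx + (A(u_{j+1}) − 2A(u_j) + A(u_{j−1}))/Δx² is monotone: if u, v are two solutions (in ℓ∞ ∩ ℓ¹) with u_j(0) ≤ v_j(0) for all j, then u_j(t) ≤ v_j(t) for all j and all t ≥ 0. -/

import Mathlib

/-!
The difference `w = u - v` of two solutions obeys a maximum principle. At an index where `w` attains
a positive maximum `m`, the scheme is monotone in the neighbouring values and `f` is decreasing, so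
`w' ≤ L m` with `L` built from the Lipschitz constants of `f` on the range of the solutions and
of `A`. Hence `w` can never touch the barrier `ε e^{Ct}` with `C > L`: at the first touching time
its derivative would have to be at least `C m`. Finding such a first touching time uses the `ℓ¹`
decay together with the uniform Lipschitz bound in time, which make the times at which some
component lies above `ε` a locally finite union of closed sets.
-/

/-- `u` solves the semi-discrete scheme
`d/dt u_j = −(f(u_{j+1}) − f(u_j))/Δx + (A(u_{j+1}) − 2A(u_j) + A(u_{j−1}))/Δx²`,
and is bounded (ℓ∞) with summable (ℓ¹) profile at each time. -/
def SolvesScheme (f A : ℝ → ℝ) (Δx : ℝ) (u : ℝ → ℤ → ℝ) : Prop :=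
  (∀ j : ℤ, ∀ t : ℝ,
    HasDerivAt (fun s => u s j)
      (-(f (u t (j + 1)) - f (u t j)) / Δx +
        (A (u t (j + 1)) - 2 * A (u t j) + A (u t (j - 1))) / Δx ^ 2) t) ∧
  (∃ B : ℝ, ∀ t : ℝ, ∀ j : ℤ, |u t j| ≤ B) ∧
  (∀ t : ℝ, Summable fun j : ℤ => |u t j|)

open Filter Topology Set NNReal

noncomputable def schemeRHS (f A : ℝ → ℝ) (Δx : ℝ) (w : ℤ → ℝ) (j : ℤ) : ℝ :=
  -(f (w (j + 1)) - f (w j)) / Δx + (A (w (j + 1)) - 2 * A (w j) + A (w (j - 1))) / Δx ^ 2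

lemma SolvesScheme.hasDerivAt {f A : ℝ → ℝ} {Δx : ℝ} {u : ℝ → ℤ → ℝ}
    (hu : SolvesScheme f A Δx u) (j : ℤ) (t : ℝ) :
    HasDerivAt (fun s => u s j) (schemeRHS f A Δx (u t) j) t :=
  hu.1 j t

lemma MonotoneOn.sub_le_mul_of_sub_le {g : ℝ → ℝ} {s : Set ℝ} {L : ℝ≥0} (hg : MonotoneOn g s)
    (hL : LipschitzOnWith L g s) {x y m : ℝ} (hx : x ∈ s) (hy : y ∈ s) (hm : 0 ≤ m)
    (hxy : x - y ≤ m) : g x - g y ≤ L * m := by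
  rcases le_total x y with h | h
  · linarith [hg hx hy h, mul_nonneg L.coe_nonneg hm]
  · calc g x - g y ≤ |g x - g y| := le_abs_self _
      _ ≤ L * |x - y| := by simpa only [Real.dist_eq] using hL.dist_le_mul x hx y hy
      _ ≤ L * m := by rw [abs_of_nonneg (sub_nonneg.2 h)]; gcongr

lemma schemeRHS_sub_le {f A : ℝ → ℝ} {s : Set ℝ} {Δx : ℝ} {Lf LA : ℝ≥0} (hΔx : 0 < Δx)
    (hf : AntitoneOn f s) (hfL : LipschitzOnWith Lf f s) (hA : Monotone A)
    (hAL : LipschitzWith LA A) {u v : ℤ → ℝ} (hu : ∀ k, u k ∈ s) (hv : ∀ k, v k ∈ s) {j : ℤ}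
    {m : ℝ} (hmax : ∀ k, u k - v k ≤ m) (hj : v j ≤ u j) :
    schemeRHS f A Δx u j - schemeRHS f A Δx v j ≤ (Lf / Δx + 2 * LA / Δx ^ 2) * m := by
  have hm : 0 ≤ m := by linarith [hmax j]
  have hflux : f (v (j + 1)) - f (u (j + 1)) ≤ Lf * m := by
    have := hf.neg.sub_le_mul_of_sub_le hfL.neg (hu (j + 1)) (hv (j + 1)) hm (hmax (j + 1))
    linarith
  have hA' : ∀ k, A (u k) - A (v k) ≤ LA * m := fun k =>
    hA.monotoneOn univ |>.sub_le_mul_of_sub_le (hAL.lipschitzOnWith) trivial trivial hm (hmax k)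
  have hfj : f (u j) - f (v j) ≤ 0 := sub_nonpos.2 (hf (hv j) (hu j) hj)
  have hAj : 0 ≤ A (u j) - A (v j) := sub_nonneg.2 (hA hj)
  calc schemeRHS f A Δx u j - schemeRHS f A Δx v j
      = (f (v (j + 1)) - f (u (j + 1)) + (f (u j) - f (v j))) / Δx +
        (A (u (j + 1)) - A (v (j + 1)) + (A (u (j - 1)) - A (v (j - 1))) -
          2 * (A (u j) - A (v j))) / Δx ^ 2 := by
        unfold schemeRHS; ring
    _ ≤ (Lf * m + 0) / Δx + (LA * m + LA * m - 2 * 0) / Δx ^ 2 := by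
        gcongr
        · exact hA' _
        · exact hA' _
    _ = (Lf / Δx + 2 * LA / Δx ^ 2) * m := by ring

lemma exists_abs_schemeRHS_le {f A : ℝ → ℝ} (hf : Continuous f) (hA : Continuous A) (Δx B : ℝ) :
    ∃ K : ℝ≥0, ∀ w : ℤ → ℝ, (∀ k, w k ∈ Icc (-B) B) → ∀ j, |schemeRHS f A Δx w j| ≤ K := by
  obtain ⟨C, hC⟩ :=
    (isCompact_Icc.prod (isCompact_Icc.prod isCompact_Icc)).exists_bound_of_continuousOn
      (f := fun p : ℝ × ℝ × ℝ =>
        -(f p.2.2 - f p.2.1) / Δx + (A p.2.2 - 2 * A p.2.1 + A p.1) / Δx ^ 2)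
      (s := Icc (-B) B ×ˢ Icc (-B) B ×ˢ Icc (-B) B) (by fun_prop)
  exact ⟨C.toNNReal, fun w hw j =>
    (hC (w (j - 1), w j, w (j + 1)) ⟨hw _, hw _, hw _⟩).trans (Real.le_coe_toNNReal C)⟩

lemma lipschitzWith_of_hasDerivAt_abs_le {g g' : ℝ → ℝ} {K : ℝ≥0}
    (hg : ∀ t, HasDerivAt g (g' t) t) (hK : ∀ t, |g' t| ≤ K) : LipschitzWith K g :=
  lipschitzOnWith_univ.1 <| convex_univ.lipschitzOnWith_of_nnnorm_hasDerivWithin_le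
    (fun t _ => (hg t).hasDerivWithinAt) fun t _ => by
      rw [← NNReal.coe_le_coe, coe_nnnorm]; exact hK t

lemma SolvesScheme.exists_lipschitzWith {f A : ℝ → ℝ} {Δx : ℝ} {u : ℝ → ℤ → ℝ}
    (hf : Continuous f) (hA : Continuous A) (hu : SolvesScheme f A Δx u) :
    ∃ K : ℝ≥0, ∀ j, LipschitzWith K fun t => u t j := by
  obtain ⟨B, hB⟩ := hu.2.1
  obtain ⟨K, hK⟩ := exists_abs_schemeRHS_le hf hA Δx B
  exact ⟨K, fun j => lipschitzWith_of_hasDerivAt_abs_le (hu.hasDerivAt j)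
    fun t => hK (u t) (fun k => abs_le.1 (hB t k)) j⟩

lemma locallyFinite_setOf_le_apply {X ι : Type*} [PseudoMetricSpace X] {w : X → ι → ℝ}
    {K : ℝ≥0} {ε : ℝ} (hε : 0 < ε) (hlip : ∀ i, LipschitzWith K fun x => w x i)
    (hdecay : ∀ x, Tendsto (w x) cofinite (𝓝 0)) : LocallyFinite fun i => {x | ε ≤ w x i} := by
  intro x
  set δ := ε / (2 * (K + 1))
  have hKδ : K * δ ≤ ε / 2 := by
    rw [mul_div_assoc', div_le_div_iff₀ (by positivity) two_pos]
    nlinarith [K.2]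
  refine ⟨Metric.ball x δ, Metric.ball_mem_nhds x (by positivity), ?_⟩
  refine (eventually_cofinite.1 <| (hdecay x).eventually (gt_mem_nhds (half_pos hε))).subset ?_
  rintro i ⟨y, hy, hyx⟩
  have hdist := (hlip i).dist_le_mul y x
  rw [Real.dist_eq, abs_le] at hdist
  have hKdist : K * dist y x ≤ K * δ :=
    mul_le_mul_of_nonneg_left (Metric.mem_ball.1 hyx).le K.coe_nonneg
  simp only [mem_ofPred_eq, not_lt] at hy ⊢
  linarith [hdist.2]

lemma HasDerivAt.nonneg_of_le_of_mem_Ioo {φ : ℝ → ℝ} {a b d : ℝ} (hd : HasDerivAt φ d a)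
    (hba : b < a) (h : ∀ t ∈ Ioo b a, φ t ≤ φ a) : 0 ≤ d := by
  have hs : Tendsto (slope φ a) (𝓝[<] a) (𝓝 d) :=
    (hasDerivAt_iff_tendsto_slope.mp hd).mono_left (nhdsWithin_mono a fun x hx => ne_of_lt hx)
  refine ge_of_tendsto hs ?_
  filter_upwards [Ioo_mem_nhdsLT hba] with t ht
  rw [slope_def_field]
  exact div_nonneg_of_nonpos (sub_nonpos.2 (h t ht)) (by linarith [ht.2])

section MaximumPrinciple

variable {ι : Type*} {w w' : ℝ → ι → ℝ} {K : ℝ≥0} {L : ℝ}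

lemma isClosed_iUnion_setOf_barrier_le (hlip : ∀ i, LipschitzWith K fun t => w t i)
    (hdecay : ∀ t, Tendsto (w t) cofinite (𝓝 0)) {C ε : ℝ} (hC : 0 ≤ C) (hε : 0 < ε) :
    IsClosed (⋃ i, {t | 0 ≤ t ∧ ε * Real.exp (C * t) ≤ w t i}) := by
  refine LocallyFinite.isClosed_iUnion ?_ fun i =>
    isClosed_Ici.inter (isClosed_le (by fun_prop) (hlip i).continuous)
  refine (locallyFinite_setOf_le_apply hε hlip hdecay).subset fun i s ⟨hs, hbs⟩ => ?_
  exact le_trans (le_mul_of_one_le_right hε.le (Real.one_le_exp (mul_nonneg hC hs))) hbs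

lemma lt_barrier_of_deriv_le_mul_at_max
    (hderiv : ∀ t i, HasDerivAt (fun s => w s i) (w' t i) t)
    (hlip : ∀ i, LipschitzWith K fun t => w t i) (hdecay : ∀ t, Tendsto (w t) cofinite (𝓝 0))
    (hmax : ∀ t i, 0 < w t i → (∀ k, w t k ≤ w t i) → w' t i ≤ L * w t i)
    (h0 : ∀ i, w 0 i ≤ 0) {C ε : ℝ} (hC : 0 ≤ C) (hLC : L < C) (hε : 0 < ε) {t : ℝ}
    (ht : 0 ≤ t) (i : ι) : w t i < ε * Real.exp (C * t) := by
  set b : ℝ → ℝ := fun t => ε * Real.exp (C * t) with hb_def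
  have hb : ∀ t, HasDerivAt b (C * b t) t := fun t => by
    simpa [hb_def, mul_comm, mul_left_comm] using
      (((hasDerivAt_id t).const_mul C).exp).const_mul ε
  have hb_pos : ∀ t, 0 < b t := fun t => by positivity
  by_contra! hti
  set S := ⋃ i, {t | 0 ≤ t ∧ b t ≤ w t i}
  have hS_closed : IsClosed S := isClosed_iUnion_setOf_barrier_le hlip hdecay hC hε
  have hS_ne : S.Nonempty := ⟨t, mem_iUnion.2 ⟨i, ht, hti⟩⟩
  have hS_bdd : BddBelow S := ⟨0, fun s hs => (mem_iUnion.1 hs).elim fun _ h => h.1⟩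
  set t₀ := sInf S
  obtain ⟨i₀, ht₀, hi₀⟩ := mem_iUnion.1 (hS_closed.csInf_mem hS_ne hS_bdd)
  have hbefore : ∀ s ∈ Ico 0 t₀, ∀ k, w s k < b s := fun s hs k => by
    by_contra! hks
    exact (csInf_le hS_bdd (mem_iUnion.2 ⟨k, hs.1, hks⟩)).not_gt hs.2
  have ht₀_pos : 0 < t₀ := by
    refine ht₀.lt_of_ne fun h => ?_
    rw [← h] at hi₀
    linarith [h0 i₀, hb_pos 0]
  have hle : ∀ k, w t₀ k ≤ b t₀ := fun k => by
    have hcont := ((hlip k).continuous.sub (by fun_prop : Continuous b)).continuousWithinAt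
      (s := Iio t₀) (x := t₀)
    refine sub_nonpos.1 (le_of_tendsto hcont ?_)
    filter_upwards [Ioo_mem_nhdsLT ht₀_pos] with s hs
    exact (sub_neg.2 (hbefore s ⟨hs.1.le, hs.2⟩ k)).le
  have heq : w t₀ i₀ = b t₀ := (hle i₀).antisymm hi₀
  have hderiv_nonneg : 0 ≤ w' t₀ i₀ - C * b t₀ :=
    ((hderiv t₀ i₀).sub (hb t₀)).nonneg_of_le_of_mem_Ioo ht₀_pos fun s hs => by
      show w s i₀ - b s ≤ w t₀ i₀ - b t₀
      linarith [hbefore s ⟨hs.1.le, hs.2⟩ i₀]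
  have hmax₀ := hmax t₀ i₀ (heq ▸ hb_pos t₀) fun k => heq ▸ hle k
  rw [heq] at hmax₀
  linarith [mul_lt_mul_of_pos_right hLC (hb_pos t₀)]

theorem nonpos_of_deriv_le_mul_at_max
    (hderiv : ∀ t i, HasDerivAt (fun s => w s i) (w' t i) t)
    (hlip : ∀ i, LipschitzWith K fun t => w t i) (hdecay : ∀ t, Tendsto (w t) cofinite (𝓝 0))
    (hmax : ∀ t i, 0 < w t i → (∀ k, w t k ≤ w t i) → w' t i ≤ L * w t i)
    (h0 : ∀ i, w 0 i ≤ 0) {t : ℝ} (ht : 0 ≤ t) (i : ι) : w t i ≤ 0 := by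
  set C := max L 0 + 1
  refine le_of_forall_pos_lt_add fun δ hδ => ?_
  have := lt_barrier_of_deriv_le_mul_at_max hderiv hlip hdecay hmax h0 (C := C)
    (by positivity) (by linarith [le_max_left L 0]) (div_pos hδ (Real.exp_pos (C * t))) ht i
  rwa [div_mul_cancel₀ _ (Real.exp_pos _).ne', ← zero_add δ] at this

end MaximumPrinciple

theorem stmt11 (f A : ℝ → ℝ) (Δx : ℝ) (hΔx : 0 < Δx)
    (hf : ContDiff ℝ 1 f) (hf' : ∀ x, deriv f x < 0)
    (hA : Monotone A) (LA : NNReal) (hALip : LipschitzWith LA A)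
    (u v : ℝ → ℤ → ℝ)
    (hu : SolvesScheme f A Δx u) (hv : SolvesScheme f A Δx v)
    (h0 : ∀ j, u 0 j ≤ v 0 j) :
    ∀ t ≥ (0 : ℝ), ∀ j, u t j ≤ v t j := by
  obtain ⟨Ku, hKu⟩ := hu.exists_lipschitzWith hf.continuous hALip.continuous
  obtain ⟨Kv, hKv⟩ := hv.exists_lipschitzWith hf.continuous hALip.continuous
  obtain ⟨Bu, hBu⟩ := hu.2.1
  obtain ⟨Bv, hBv⟩ := hv.2.1
  set B := max Bu Bv
  have hub : ∀ t j, u t j ∈ Icc (-B) B := fun t j =>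
    abs_le.1 ((hBu t j).trans (le_max_left _ _))
  have hvb : ∀ t j, v t j ∈ Icc (-B) B := fun t j =>
    abs_le.1 ((hBv t j).trans (le_max_right _ _))
  obtain ⟨Lf, hLf⟩ := hf.contDiffOn.exists_lipschitzOnWith one_ne_zero (convex_Icc (-B) B)
    isCompact_Icc
  have hf_anti : AntitoneOn f (Icc (-B) B) := (strictAnti_of_deriv_neg hf').antitone.antitoneOn _
  have hdecay : ∀ t, Tendsto (fun j => u t j - v t j) cofinite (𝓝 0) := fun t => by
    simpa using (hu.2.2 t).of_abs.tendsto_cofinite_zero.sub (hv.2.2 t).of_abs.tendsto_cofinite_zero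
  intro t ht j
  refine sub_nonpos.1 (nonpos_of_deriv_le_mul_at_max (w := fun t j => u t j - v t j)
    (fun t j => (hu.hasDerivAt j t).sub (hv.hasDerivAt j t)) (fun j => (hKu j).sub (hKv j))
    hdecay (fun t j hj hmax => schemeRHS_sub_le hΔx hf_anti hLf hA hALip (hub t) (hvb t) hmax
      (sub_pos.1 hj).le) (fun j => sub_nonpos.2 (h0 j)) ht j)
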